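/- (Corollary: large-ν behavior of the I^{1/2} prior, and its tail integrability.) The function ν ↦ √(I(ν)), where I(ν) = ψ₁(ν/2) − ψ₁((ν+1)/2) − 2(ν+5)/(ν(ν+1)(ν+3)), is O(ν⁻²) as ν → ∞ (with respect to the filter atTop), and consequently ν ↦ √(I(ν)) is Lebesgue-integrable on the interval (1, ∞). -/
import Mathlib


open Filter Asymptotics MeasureTheory Topology

/-- The trigamma function `ψ₁(x) = ∑_{n=0}^∞ 1/(x+n)²`. -/
noncomputable def trigamma (x : ℝ) : ℝ := ∑' n : ℕ, 1 / (x + n) ^ 2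

/-- The Fisher information for the degrees of freedom of the Student-t model
(per observation, up to the factor `n/4`). -/
noncomputable def fisherNu (ν : ℝ) : ℝ :=
  trigamma (ν / 2) - trigamma ((ν + 1) / 2) - 2 * (ν + 5) / (ν * (ν + 1) * (ν + 3))

lemma summable_trigamma_aux {x : ℝ} (hx : 0 < x) :
    Summable (fun n : ℕ => 1 / (x + n) ^ 2) := by
  have hc : 0 < min x 1 := lt_min hx one_pos
  have hbase : Summable (fun n : ℕ => 1 / ((n : ℝ) + 1) ^ 2) := by
    have h2 : Summable (fun n : ℕ => 1 / (n : ℝ) ^ 2) :=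
      Real.summable_one_div_nat_pow.mpr (by norm_num)
    have := (summable_nat_add_iff (f := fun n : ℕ => 1 / (n : ℝ) ^ 2) 1).mpr h2
    refine this.congr fun n => ?_
    push_cast
    ring
  refine Summable.of_nonneg_of_le (fun n => by positivity)
    (fun n => ?_) (hbase.mul_left ((min x 1) ^ 2)⁻¹)
  have hn : (0 : ℝ) ≤ n := Nat.cast_nonneg n
  have hkey : min x 1 * ((n : ℝ) + 1) ≤ x + n := by
    rcases le_total x 1 with h | h
    · rw [min_eq_left h]
      nlinarith [min_le_left x (1 : ℝ)]
    · rw [min_eq_right h]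
      nlinarith
  have h1 : 0 < min x 1 * ((n : ℝ) + 1) := by positivity
  have h2 : (min x 1 * ((n : ℝ) + 1)) ^ 2 ≤ (x + n) ^ 2 := by
    apply pow_le_pow_left₀ h1.le hkey
  calc 1 / (x + n) ^ 2 ≤ 1 / (min x 1 * ((n : ℝ) + 1)) ^ 2 := by
        apply one_div_le_one_div_of_le (by positivity) h2
    _ = ((min x 1) ^ 2)⁻¹ * (1 / ((n : ℝ) + 1) ^ 2) := by
        rw [mul_pow]
        field_simp
  -- done

lemma tsum_telescope_aux {b : ℕ → ℝ} (hb : Summable b) :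
    ∑' m, (b m - b (m + 1)) = b 0 := by
  have hb1 : Summable (fun m => b (m + 1)) := (summable_nat_add_iff 1).mpr hb
  have hBsum : Summable (fun m => b m - b (m + 1)) := hb.sub hb1
  have h1 : Tendsto (fun n => ∑ i ∈ Finset.range n, (b i - b (i + 1))) atTop (𝓝 (b 0)) := by
    have h0 : Tendsto (fun n : ℕ => b 0 - b n) atTop (𝓝 (b 0 - 0)) :=
      tendsto_const_nhds.sub hb.tendsto_atTop_zero
    rw [sub_zero] at h0
    simpa only [Finset.sum_range_sub' b] using h0
  exact tendsto_nhds_unique hBsum.hasSum.tendsto_sum_nat h1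

lemma fisherNu_le {ν : ℝ} (hν : 1 ≤ ν) : fisherNu ν ≤ 49 / ν ^ 4 := by
  have hν0 : (0 : ℝ) < ν := lt_of_lt_of_le one_pos hν
  set a : ℕ → ℝ := fun m => 1 / (ν + m) ^ 2 with ha
  have hpos : ∀ m : ℕ, (0 : ℝ) < ν + m := by
    intro m
    have : (0 : ℝ) ≤ m := Nat.cast_nonneg m
    linarith
  have Sa : Summable a := summable_trigamma_aux hν0
  have Sa1 : Summable (fun m => a (m + 1)) := (summable_nat_add_iff 1).mpr Sa
  set G : ℕ → ℝ := fun m => a m - a (m + 1) with hG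
  have SG : Summable G := Sa.sub Sa1
  have SG1 : Summable (fun m => G (m + 1)) := (summable_nat_add_iff 1).mpr SG
  set H : ℕ → ℝ := fun m => G m - G (m + 1) with hH
  have SH : Summable H := SG.sub SG1
  have hinj2 : Function.Injective (fun n : ℕ => 2 * n) := by
    intro a b h; dsimp only at h; omega
  have hinj21 : Function.Injective (fun n : ℕ => 2 * n + 1) := by
    intro a b h; dsimp only at h; omega
  have hinj22 : Function.Injective (fun n : ℕ => 2 * (n + 1)) := by
    intro a b h; dsimp only at h; omega
  have SAe : Summable (fun n => a (2 * n)) := Sa.comp_injective hinj2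
  have SAo : Summable (fun n => a (2 * n + 1)) := Sa.comp_injective hinj21
  have SGe : Summable (fun n => G (2 * n)) := SG.comp_injective hinj2
  have SGo : Summable (fun n => G (2 * n + 1)) := SG.comp_injective hinj21
  have SHe : Summable (fun n => H (2 * n)) := SH.comp_injective hinj2
  have SHo : Summable (fun n => H (2 * n + 1)) := SH.comp_injective hinj21
  have SHe2 : Summable (fun n => H (2 * (n + 1))) := SH.comp_injective hinj22
  -- value of trigamma at ν/2 and (ν+1)/2
  have htri1 : trigamma (ν / 2) = 4 * ∑' n, a (2 * n) := by
    rw [trigamma, ← tsum_mul_left]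
    apply tsum_congr
    intro n
    have hx : (0 : ℝ) < ν + ((2 * n : ℕ) : ℝ) := hpos _
    have hcast : ν / 2 + (n : ℝ) = (ν + ((2 * n : ℕ) : ℝ)) / 2 := by push_cast; ring
    have hx' : (ν + ((2 * n : ℕ) : ℝ)) ≠ 0 := ne_of_gt hx
    simp only [ha]
    rw [hcast]
    field_simp
    ring
  have htri2 : trigamma ((ν + 1) / 2) = 4 * ∑' n, a (2 * n + 1) := by
    rw [trigamma, ← tsum_mul_left]
    apply tsum_congr
    intro n
    have hx : (0 : ℝ) < ν + ((2 * n + 1 : ℕ) : ℝ) := hpos _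
    have hcast : (ν + 1) / 2 + (n : ℝ) = (ν + ((2 * n + 1 : ℕ) : ℝ)) / 2 := by push_cast; ring
    have hx' : (ν + ((2 * n + 1 : ℕ) : ℝ)) ≠ 0 := ne_of_gt hx
    simp only [ha]
    rw [hcast]
    field_simp
    ring
  -- telescoping sums
  have hGsum : ∑' m, G m = a 0 := by
    simp only [hG]
    exact tsum_telescope_aux Sa
  have hHsum : ∑' m, H m = G 0 := by
    simp only [hH]
    exact tsum_telescope_aux SG
  -- even/odd splits
  have hGeo : (∑' n, G (2 * n)) + ∑' n, G (2 * n + 1) = a 0 := by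
    rw [tsum_even_add_odd SGe SGo, hGsum]
  have hHeo : (∑' n, H (2 * n)) + ∑' n, H (2 * n + 1) = G 0 := by
    rw [tsum_even_add_odd SHe SHo, hHsum]
  -- E - O = GE
  have hEO : (∑' n, a (2 * n)) - ∑' n, a (2 * n + 1) = ∑' n, G (2 * n) := by
    rw [← Summable.tsum_sub SAe SAo]
  -- GE - GO = HE
  have hGEGO : (∑' n, G (2 * n)) - ∑' n, G (2 * n + 1) = ∑' n, H (2 * n) := by
    rw [← Summable.tsum_sub SGe SGo]
  -- H is antitone
  have Hdec : ∀ m : ℕ, H (m + 1) ≤ H m := by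
    intro m
    simp only [hH, hG, ha]
    have hx : (0 : ℝ) < ν + m := hpos m
    have c1 : ((m : ℝ) + 1) = ((m + 1 : ℕ) : ℝ) := by push_cast; ring
    have c2 : ((m : ℝ) + 2) = ((m + 1 + 1 : ℕ) : ℝ) := by push_cast; ring
    have c3 : ((m : ℝ) + 3) = ((m + 1 + 1 + 1 : ℕ) : ℝ) := by push_cast; ring
    rw [← c1, ← c2, ← c3]
    set x : ℝ := ν + m with hxdef
    have e1 : ν + ((m : ℝ) + 1) = x + 1 := by rw [hxdef]; ring
    have e2 : ν + ((m : ℝ) + 2) = x + 2 := by rw [hxdef]; ring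
    have e3 : ν + ((m : ℝ) + 3) = x + 3 := by rw [hxdef]; ring
    rw [e1, e2, e3]
    have h1 : (0 : ℝ) < x + 1 := by linarith
    have h2 : (0 : ℝ) < x + 2 := by linarith
    have h3 : (0 : ℝ) < x + 3 := by linarith
    have key : 1 / x ^ 2 - 3 / (x + 1) ^ 2 + 3 / (x + 2) ^ 2 - 1 / (x + 3) ^ 2 =
        (24 * x ^ 3 + 108 * x ^ 2 + 132 * x + 36) /
          (x ^ 2 * (x + 1) ^ 2 * (x + 2) ^ 2 * (x + 3) ^ 2) := by
      field_simp
      ring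
    rw [← sub_nonneg]
    have e : 1 / x ^ 2 - 1 / (x + 1) ^ 2 - (1 / (x + 1) ^ 2 - 1 / (x + 2) ^ 2) -
        (1 / (x + 1) ^ 2 - 1 / (x + 2) ^ 2 - (1 / (x + 2) ^ 2 - 1 / (x + 3) ^ 2)) =
        (24 * x ^ 3 + 108 * x ^ 2 + 132 * x + 36) /
          (x ^ 2 * (x + 1) ^ 2 * (x + 2) ^ 2 * (x + 3) ^ 2) := by
      field_simp
      ring
    rw [e]
    positivity
  -- HE ≤ H 0 + HO
  have hHE_bound : (∑' n, H (2 * n)) ≤ H 0 + ∑' n, H (2 * n + 1) := by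
    have hshift : (∑' n, H (2 * n)) = H 0 + ∑' n, H (2 * (n + 1)) := by
      have := Summable.tsum_eq_zero_add (f := fun n : ℕ => H (2 * n)) SHe
      simpa using this
    rw [hshift]
    have hle : (∑' n, H (2 * (n + 1))) ≤ ∑' n, H (2 * n + 1) := by
      apply Summable.tsum_le_tsum _ SHe2 SHo
      intro n
      have h := Hdec (2 * n + 1)
      have : 2 * (n + 1) = 2 * n + 1 + 1 := by omega
      rw [this]
      exact h
    linarith
  -- combine: 2 * HE ≤ G 0 + H 0
  have h2HE : 2 * (∑' n, H (2 * n)) ≤ G 0 + H 0 := by linarith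
  -- 2 * GE = a 0 + HE
  have h2GE : 2 * (∑' n, G (2 * n)) = a 0 + ∑' n, H (2 * n) := by linarith
  -- final: fisherNu ν = 4 * GE - r ≤ 2 a0 + G0 + H0 - r
  have hD : trigamma (ν / 2) - trigamma ((ν + 1) / 2) = 4 * ∑' n, G (2 * n) := by
    rw [htri1, htri2, ← hEO]
    ring
  have hDle : trigamma (ν / 2) - trigamma ((ν + 1) / 2) ≤ 2 * a 0 + G 0 + H 0 := by
    rw [hD]
    linarith
  have hfinal : fisherNu ν ≤ 2 * a 0 + G 0 + H 0 - 2 * (ν + 5) / (ν * (ν + 1) * (ν + 3)) := by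
    rw [fisherNu]
    linarith
  refine le_trans hfinal ?_
  -- unfold a, G, H at 0,1,2
  have ea0 : a 0 = 1 / ν ^ 2 := by simp [ha]
  have ea1 : a 1 = 1 / (ν + 1) ^ 2 := by simp [ha]
  have ea2 : a 2 = 1 / (ν + 2) ^ 2 := by norm_num [ha]
  have eG0 : G 0 = a 0 - a 1 := rfl
  have eG1 : G 1 = a 1 - a 2 := rfl
  have eH0 : H 0 = G 0 - G 1 := rfl
  rw [eH0, eG0, eG1, ea0, ea1, ea2]
  have h1 : (0 : ℝ) < ν + 1 := by linarith
  have h2 : (0 : ℝ) < ν + 2 := by linarith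
  have h3 : (0 : ℝ) < ν + 3 := by linarith
  have key : 49 / ν ^ 4 - (2 * (1 / ν ^ 2) + (1 / ν ^ 2 - 1 / (ν + 1) ^ 2) +
      (1 / ν ^ 2 - 1 / (ν + 1) ^ 2 - (1 / (ν + 1) ^ 2 - 1 / (ν + 2) ^ 2)) -
      2 * (ν + 5) / (ν * (ν + 1) * (ν + 3))) =
      (588 + 1960 * ν + 2451 * ν ^ 2 + 1399 * ν ^ 3 + 358 * ν ^ 4 + 32 * ν ^ 5) /
        (ν ^ 4 * (ν + 1) ^ 2 * (ν + 2) ^ 2 * (ν + 3)) := by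
    field_simp
    ring
  have hfrac : (0 : ℝ) ≤
      (588 + 1960 * ν + 2451 * ν ^ 2 + 1399 * ν ^ 3 + 358 * ν ^ 4 + 32 * ν ^ 5) /
        (ν ^ 4 * (ν + 1) ^ 2 * (ν + 2) ^ 2 * (ν + 3)) := by positivity
  linarith

lemma sqrt_fisherNu_le {ν : ℝ} (hν : 1 ≤ ν) :
    Real.sqrt (fisherNu ν) ≤ 7 * (ν ^ 2)⁻¹ := by
  have hν0 : (0 : ℝ) < ν := lt_of_lt_of_le one_pos hν
  have h49 : fisherNu ν ≤ 49 / ν ^ 4 := fisherNu_le hν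
  have heq : (49 : ℝ) / ν ^ 4 = (7 * (ν ^ 2)⁻¹) ^ 2 := by
    field_simp
    ring
  calc Real.sqrt (fisherNu ν) ≤ Real.sqrt ((7 * (ν ^ 2)⁻¹) ^ 2) :=
        Real.sqrt_le_sqrt (by linarith [heq ▸ h49])
    _ = 7 * (ν ^ 2)⁻¹ := Real.sqrt_sq (by positivity)

lemma antitoneOn_trigamma_comp {c : ℝ} (hc : 0 ≤ c) :
    AntitoneOn (fun ν : ℝ => trigamma ((ν + c) / 2)) (Set.Ioi 1) := by
  intro x hx y hy hxy
  simp only [Set.mem_Ioi] at hx hy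
  have hx0 : (0 : ℝ) < (x + c) / 2 := by linarith
  have hy0 : (0 : ℝ) < (y + c) / 2 := by linarith
  unfold trigamma
  apply Summable.tsum_le_tsum _ (summable_trigamma_aux hy0) (summable_trigamma_aux hx0)
  intro n
  have hn : (0 : ℝ) ≤ n := Nat.cast_nonneg n
  apply one_div_le_one_div_of_le (by positivity)
  gcongr

theorem sqrt_fisherNu_isBigO_atTop_and_tail_integrable :
    ((fun ν : ℝ => Real.sqrt (fisherNu ν)) =O[atTop] fun ν : ℝ => (ν ^ 2)⁻¹) ∧
      IntegrableOn (fun ν : ℝ => Real.sqrt (fisherNu ν)) (Set.Ioi 1) volume := by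
  constructor
  · rw [isBigO_iff]
    refine ⟨7, ?_⟩
    filter_upwards [eventually_ge_atTop (1 : ℝ)] with ν hν
    have h := sqrt_fisherNu_le hν
    have hν0 : (0 : ℝ) < ν := lt_of_lt_of_le one_pos hν
    rw [Real.norm_eq_abs, Real.norm_eq_abs, abs_of_nonneg (Real.sqrt_nonneg _),
      abs_of_nonneg (by positivity)]
    linarith
  · have hmeas : AEStronglyMeasurable (fun ν : ℝ => Real.sqrt (fisherNu ν))
        (volume.restrict (Set.Ioi 1)) := by
      have h1 : AEMeasurable (fun ν : ℝ => trigamma (ν / 2))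
          (volume.restrict (Set.Ioi 1)) := by
        have := aemeasurable_restrict_of_antitoneOn (μ := volume) measurableSet_Ioi
          (antitoneOn_trigamma_comp (le_refl 0))
        simpa using this
      have h2 : AEMeasurable (fun ν : ℝ => trigamma ((ν + 1) / 2))
          (volume.restrict (Set.Ioi 1)) :=
        aemeasurable_restrict_of_antitoneOn (μ := volume) measurableSet_Ioi
          (antitoneOn_trigamma_comp zero_le_one)
      have h3 : AEMeasurable (fun ν : ℝ => 2 * (ν + 5) / (ν * (ν + 1) * (ν + 3)))
          (volume.restrict (Set.Ioi 1)) := by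
        apply Measurable.aemeasurable
        measurability
      have h4 : AEMeasurable fisherNu (volume.restrict (Set.Ioi 1)) := by
        have := (h1.sub h2).sub h3
        exact this.congr (Filter.Eventually.of_forall fun ν => rfl)
      exact (Real.continuous_sqrt.measurable.comp_aemeasurable h4).aestronglyMeasurable
    have hg : IntegrableOn (fun ν : ℝ => 7 * ν ^ (-2 : ℝ)) (Set.Ioi 1) volume := by
      exact (integrableOn_Ioi_rpow_of_lt (by norm_num) one_pos).const_mul 7
    apply Integrable.mono' hg hmeas
    rw [ae_restrict_iff' measurableSet_Ioi]
    apply Filter.Eventually.of_forall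
    intro ν hν
    simp only [Set.mem_Ioi] at hν
    have hν0 : (0 : ℝ) < ν := lt_trans one_pos hν
    have hrpow : ν ^ (-2 : ℝ) = (ν ^ 2)⁻¹ := by
      rw [Real.rpow_neg hν0.le, ← Real.rpow_natCast ν 2]
      norm_num
    rw [Real.norm_eq_abs, abs_of_nonneg (Real.sqrt_nonneg _), hrpow]
    exact sqrt_fisherNu_le hν.le
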